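/- arXiv:1901.00741 — 3 statements merged into one kernel-verified Lean document; each statement's English description precedes it below -/
import Mathlib

section
/- The informed-bot equilibrium link probability θ_BI* = max(1 − (μ_k γ_c + ρ γ_b(β + μ_k))/(E ρ p γ_b γ_c), 0) is strictly positive for some μ_k ≥ 0 (in particular for μ_k = 0) if and only if β < p γ_c E, where E = E[K]. -/
/-- The informed-bot equilibrium link probability is positive for some patching rate
(in particular μ = 0) iff `β < p γ_c E`. -/
theorem stmt_8 (E ρ γb γc p β : ℝ) (hE : 0 < E) (hρ : 0 < ρ) (hρ1 : ρ ≤ 1)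
    (hγb : 0 < γb) (hγc : 0 < γc) (hp : 0 < p) (hp1 : p ≤ 1) (hβ : 0 ≤ β) :
    ((∃ μ : ℝ, 0 ≤ μ ∧
        0 < max (1 - (μ * γc + ρ * γb * (β + μ)) / (E * ρ * p * γb * γc)) 0) ↔
      β < p * γc * E) ∧
    (β < p * γc * E →
      0 < max (1 - (0 * γc + ρ * γb * (β + 0)) / (E * ρ * p * γb * γc)) 0) := by
  have hD : 0 < E * ρ * p * γb * γc := by positivity
  have key : β < p * γc * E →
      0 < max (1 - (0 * γc + ρ * γb * (β + 0)) / (E * ρ * p * γb * γc)) 0 := by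
    intro h
    rw [lt_max_iff]; left
    have h1 : (0 * γc + ρ * γb * (β + 0)) / (E * ρ * p * γb * γc) < 1 := by
      rw [div_lt_one hD]
      nlinarith [mul_pos hρ hγb]
    linarith
  refine ⟨⟨?_, fun h => ⟨0, le_refl 0, key h⟩⟩, key⟩
  rintro ⟨μ, hμ, hpos⟩
  rw [lt_max_iff] at hpos
  rcases hpos with h | h
  · have h1 : (μ * γc + ρ * γb * (β + μ)) / (E * ρ * p * γb * γc) < 1 := by linarith
    rw [div_lt_one hD] at h1
    nlinarith [mul_pos hρ hγb, mul_nonneg hμ hγc.le,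
      mul_nonneg (mul_nonneg hρ.le hγb.le) hμ]
  · exact absurd h (lt_irrefl 0)
end

section
/- Define B̃*(μ, k) = μ/(μ + kσ₁(μ)) with σ₁(μ) = ρ γ_b p (1 − μ/(ρ γ_b p E)) for 0 ≤ μ ≤ ρ γ_b p E. Then as a function of μ, B̃*(·, k) is concave on [0, ρ γ_b p E] when k < E and convex when k > E. -/
open Set

noncomputable def affAB (a b : ℝ) : ℝ →ᵃ[ℝ] ℝ :=
  { toFun := fun x => a * x + b
    linear := a • LinearMap.id
    map_vadd' := by intro p v; simp [mul_add]; ring }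

@[simp] lemma affAB_apply (a b x : ℝ) : affAB a b x = a * x + b := rfl

lemma aux_convex (a b : ℝ) (s : Set ℝ) (hs : Convex ℝ s)
    (hpos : ∀ x ∈ s, 0 < a * x + b) :
    ConvexOn ℝ s (fun x : ℝ => (a * x + b)⁻¹) := by
  have h1 : ConvexOn ℝ (Ioi 0) (fun x : ℝ => x⁻¹) := by
    have := convexOn_zpow (𝕜 := ℝ) (-1)
    simpa using this
  have h2 := h1.comp_affineMap (affAB a b)
  have h3 : s ⊆ (affAB a b) ⁻¹' Ioi 0 := fun x hx => by
    simpa using hpos x hx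
  exact (h2.subset h3 hs).congr (fun x hx => rfl)



/-- The equilibrium un-compromised proportion is concave in μ for `k < E` and
convex for `k > E` on `[0, ρ γ_b p E]`. -/
theorem stmt_9 (E ρ γb p : ℝ) (hE : 0 < E) (hρ : 0 < ρ) (hρ1 : ρ ≤ 1)
    (hγb : 0 < γb) (hp : 0 < p) (hp1 : p ≤ 1) (k : ℕ) (hk : 1 ≤ k) :
    ((k : ℝ) < E →
      ConcaveOn ℝ (Set.Icc 0 (ρ * γb * p * E))
        (fun μ : ℝ => μ * E / (μ * E + (k : ℝ) * (ρ * γb * p * E - μ)))) ∧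
    (E < (k : ℝ) →
      ConvexOn ℝ (Set.Icc 0 (ρ * γb * p * E))
        (fun μ : ℝ => μ * E / (μ * E + (k : ℝ) * (ρ * γb * p * E - μ)))) := by
  set C := ρ * γb * p * E with hC
  have hCpos : 0 < C := by positivity
  have hk1 : (1:ℝ) ≤ (k:ℝ) := by exact_mod_cast hk
  set a := E - (k:ℝ) with ha
  set b := (k:ℝ) * C with hb
  have hbpos : 0 < b := by positivity
  have hpos : ∀ x ∈ Set.Icc (0:ℝ) C, 0 < a * x + b := by
    intro x hx
    obtain ⟨hx0, hxC⟩ := hx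
    have h1 : a * x + b = x * E + (k:ℝ) * (C - x) := by ring
    rw [h1]
    nlinarith [mul_nonneg hx0 hE.le, mul_nonneg (sub_nonneg.2 hxC) (by linarith : (0:ℝ) ≤ (k:ℝ))]
  have hg := aux_convex a b (Set.Icc 0 C) (convex_Icc 0 C) hpos
  constructor
  · intro hkE
    have hane : a ≠ 0 := by simp [ha]; linarith
    have hapos : 0 < a := by simp [ha]; linarith
    have hc : 0 ≤ E * b / a := by positivity
    have h1 : ConcaveOn ℝ (Set.Icc 0 C)
        (fun x : ℝ => -((E * b / a) • (a * x + b)⁻¹) + E / a) :=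
      ((hg.smul hc).neg.add_const (E / a))
    refine h1.congr (fun x hx => ?_)
    have hd := (hpos x hx).ne'
    have h2 : x * E + (k:ℝ) * (C - x) = a * x + b := by ring
    simp only [smul_eq_mul, h2]
    field_simp
    ring
  · intro hkE
    have hane : a ≠ 0 := by simp [ha]; linarith
    have hc : 0 ≤ -(E * b / a) := by
      have : a < 0 := by simp [ha]; linarith
      have : E * b / a < 0 := div_neg_of_pos_of_neg (by positivity) this
      linarith
    have h1 : ConvexOn ℝ (Set.Icc 0 C)
        (fun x : ℝ => (-(E * b / a)) • (a * x + b)⁻¹ + E / a) :=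
      ((hg.smul hc).add_const (E / a))
    refine h1.congr (fun x hx => ?_)
    have hd := (hpos x hx).ne'
    have h2 : x * E + (k:ℝ) * (C - x) = a * x + b := by ring
    simp only [smul_eq_mul, h2]
    field_simp
    ring
end

section
/- Let μ̂_k = (ρ γ_b γ_c p E − ρ γ_b β)/(γ_c + ρ γ_b), assumed positive (i.e., β < p γ_c E). Then the equilibrium un-compromised proportion at this patching rate equals B̃_k*(μ̂_k) = E(p γ_c E − β) / (k(β + E p ρ γ_b) + E(E p γ_c − β)). -/
/-- Value of the un-compromised equilibrium proportion at the eradication patching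
rate `μ̂_k`. -/
theorem stmt_12 (E ρ γb γc p β : ℝ) (hE : 0 < E) (hρ : 0 < ρ) (hρ1 : ρ ≤ 1)
    (hγb : 0 < γb) (hγc : 0 < γc) (hp : 0 < p) (hp1 : p ≤ 1)
    (hβ : 0 ≤ β) (hβlt : β < p * γc * E)
    (k : ℕ) (hk : 1 ≤ k)
    (μhat : ℝ) (hμhat : μhat = (ρ * γb * γc * p * E - ρ * γb * β) / (γc + ρ * γb))
    (σ₁ : ℝ → ℝ) (hσ₁ : ∀ μ, σ₁ μ = ρ * γb * p * (1 - μ / (ρ * γb * p * E))) :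
    μhat / (μhat + (k : ℝ) * σ₁ μhat) =
      E * (p * γc * E - β) /
        ((k : ℝ) * (β + E * p * ρ * γb) + E * (E * p * γc - β)) := by
  have hD : 0 < γc + ρ * γb := by positivity
  have hk0 : (0:ℝ) ≤ (k:ℝ) := Nat.cast_nonneg k
  have hX : 0 < (k : ℝ) * (β + E * p * ρ * γb) + E * (E * p * γc - β) := by
    have h1 : 0 < E * (E * p * γc - β) := by nlinarith
    have h2 : (0:ℝ) ≤ (k : ℝ) * (β + E * p * ρ * γb) := by positivity
    linarith
  have hnum : μhat = ρ * γb * (p * γc * E - β) / (γc + ρ * γb) := by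
    rw [hμhat]; ring
  have hden : μhat + (k : ℝ) * σ₁ μhat =
      ρ * γb * (((k : ℝ) * (β + E * p * ρ * γb) + E * (E * p * γc - β)) /
        (E * (γc + ρ * γb))) := by
    rw [hσ₁, hμhat]
    field_simp
    ring
  rw [hden, hnum]
  have hργb : ρ * γb ≠ 0 := by positivity
  field_simp
end
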